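/- arXiv:1701.01804 — 5 statements merged into one kernel-verified Lean document; each statement's English description precedes it below -/
import Mathlib

section
/- Let G be a group, B ⊆ C ⊆ G be subgroups, and A ⊆ G be a subset such that AB and AC are subgroups of G and C ∩ AB = B. Then the index [AC : AB] equals the index [C : B]. -/
/-!
Since `A * B` is a subgroup containing `1`, `A` is nonempty, and then `A ⊆ AB`, `C ≤ AC`, and
`AC = (AC)⁻¹ = C * A⁻¹ ⊆ C * AB`. So every left coset of `AB` in `AC` meets `C`, and the natural
map `C ⧸ (C ∩ AB) → AC ⧸ AB` is a bijection; finally `C ∩ AB = B`.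
-/

open scoped Pointwise

namespace Subgroup

variable {G : Type*} [Group G]

theorem relIndex_eq_relIndex_of_le_of_subset_mul {H K L : Subgroup G} (hLK : L ≤ K)
    (hK : (K : Set G) ⊆ L * H) : H.relIndex L = H.relIndex K := by
  refine Nat.card_eq_of_bijective _
    ⟨(quotientSubgroupOfEmbeddingOfLE H hLK).injective, fun q => ?_⟩
  induction q using QuotientGroup.induction_on with | H k => ?_
  obtain ⟨l, hl, h, hh, hlh⟩ := hK k.2
  refine ⟨QuotientGroup.mk ⟨l, hl⟩, ?_⟩
  rw [quotientSubgroupOfEmbeddingOfLE_apply_mk, QuotientGroup.eq, mem_subgroupOf]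
  simpa [← hlh] using hh

theorem subset_of_coe_eq_mul {H K : Subgroup G} {A : Set G} (h : (H : Set G) = A * K) :
    A ⊆ H := fun a ha => by
  simpa [h] using Set.mul_mem_mul ha K.one_mem

theorem le_of_coe_eq_mul {H K : Subgroup G} {A : Set G} (h : (H : Set G) = A * K) : K ≤ H := by
  obtain ⟨a, ha, -⟩ : (1 : G) ∈ A * K := h ▸ H.one_mem
  intro k hk
  have hak : a * k ∈ (H : Set G) := h ▸ Set.mul_mem_mul ha hk
  simpa using H.mul_mem (H.inv_mem (subset_of_coe_eq_mul h ha)) hak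

theorem coe_subset_mul_of_coe_eq_mul {H K L : Subgroup G} {A : Set G}
    (hK : (K : Set G) = A * L) (hA : A ⊆ H) : (K : Set G) ⊆ L * H := by
  rw [← inv_coe_set (H := K), hK, mul_inv_rev, inv_coe_set]
  exact Set.mul_subset_mul_left (Set.inv_subset.mpr (by rwa [inv_coe_set]))

end Subgroup

open Pointwise in
theorem stmt2_general {G : Type*} [Group G] (A : Set G) (B C HAB HAC : Subgroup G)
    (hAB : (HAB : Set G) = A * (B : Set G))
    (hAC : (HAC : Set G) = A * (C : Set G))
    (hcap : (C : Set G) ∩ (HAB : Set G) = (B : Set G)) :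
    HAB.relIndex HAC = B.relIndex C := by
  have hB : HAB ⊓ C = B := SetLike.coe_injective ((Set.inter_comm _ _).trans hcap)
  have hHAC : (HAC : Set G) ⊆ C * HAB :=
    Subgroup.coe_subset_mul_of_coe_eq_mul hAC (Subgroup.subset_of_coe_eq_mul hAB)
  rw [← hB, Subgroup.inf_relIndex_right]
  exact (Subgroup.relIndex_eq_relIndex_of_le_of_subset_mul
    (Subgroup.le_of_coe_eq_mul hAC) hHAC).symm

open Pointwise in
theorem stmt2 {G : Type*} [Group G] (A : Set G) (B C HAB HAC : Subgroup G)
    (hBC : B ≤ C)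
    (hAB : (HAB : Set G) = A * (B : Set G))
    (hAC : (HAC : Set G) = A * (C : Set G))
    (hcap : (C : Set G) ∩ (HAB : Set G) = (B : Set G)) :
    HAB.relIndex HAC = B.relIndex C :=
  stmt2_general A B C HAB HAC hAB hAC hcap
end

section
/- Let α be an endomorphism of a topological group G and V a compact open subgroup with V ⊆ α(V). Then every element x of V admits an α-regressive trajectory inside V, i.e., a sequence (x_{-n})_{n≥0} in V with x_0 = x and α(x_{-n-1}) = x_{-n} for all n. -/
theorem Set.exists_backward_orbit_of_subset_image {X : Type*} {f : X → X} {s : Set X}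
    (h : s ⊆ f '' s) {x : X} (hx : x ∈ s) :
    ∃ u : ℕ → X, (∀ n, u n ∈ s) ∧ u 0 = x ∧ ∀ n, f (u (n + 1)) = u n := by
  choose g hgs hfg using fun y : s => h y.2
  let pre : s → s := fun y => ⟨g y, hgs y⟩
  refine ⟨fun n => (pre^[n] ⟨x, hx⟩ : X), fun n => (pre^[n] _).2, rfl, fun n => ?_⟩
  dsimp only
  rw [Function.iterate_succ_apply']
  exact hfg _

theorem stmt5_general {G : Type*} [Group G]
    (α : G →* G) (V : Subgroup G)
    (hsub : (V : Set G) ⊆ ⇑α '' (V : Set G)) :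
    ∀ x ∈ V, ∃ f : ℕ → G, (∀ n, f n ∈ V) ∧ f 0 = x ∧ ∀ n, α (f (n + 1)) = f n :=
  fun _ hx => Set.exists_backward_orbit_of_subset_image hsub hx

theorem stmt5 {G : Type*} [Group G] [TopologicalSpace G] [IsTopologicalGroup G]
    (α : G →* G) (hα : Continuous α) (V : Subgroup G)
    (hVc : IsCompact (V : Set G)) (hVo : IsOpen (V : Set G))
    (hsub : (V : Set G) ⊆ ⇑α '' (V : Set G)) :
    ∀ x ∈ V, ∃ f : ℕ → G, (∀ n, f n ∈ V) ∧ f 0 = x ∧ ∀ n, α (f (n + 1)) = f n :=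
  stmt5_general α V hsub
end

section
/- Let g be a Lie algebra over a field K with an absolute value, endowed with a topology making it a topological Lie algebra, and α : g → g a continuous Lie algebra endomorphism. Then the set par(α) := {x ∈ g : the orbit {αⁿ(x) : n ∈ ℕ₀} is relatively compact} is a Lie subalgebra of g. -/
/-! Since `α` commutes with `+`, `c • ·` and the bracket, the orbit of `x + y`, `c • x` or `⁅x, y⁆`
is contained in the image of the (product of the) orbit closures of `x` and `y` under that
continuous operation. This image is compact, and in an R₁ space a subset of a compact set has
compact closure. -/

open Set Function

section RelativelyCompactRange

variable {ι X Y Z : Type*} [TopologicalSpace X] [TopologicalSpace Y] [TopologicalSpace Z]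
  [R1Space Z]

theorem isCompact_closure_range_comp {f : X → Z} (hf : Continuous f) {u : ι → X}
    (hu : IsCompact (closure (range u))) : IsCompact (closure (range fun i => f (u i))) :=
  (hu.image hf).closure_of_subset <| range_comp f u ▸ image_mono subset_closure

theorem isCompact_closure_range_map₂ {f : X → Y → Z} (hf : Continuous (uncurry f))
    {u : ι → X} {v : ι → Y} (hu : IsCompact (closure (range u)))
    (hv : IsCompact (closure (range v))) :
    IsCompact (closure (range fun i => f (u i) (v i))) := by
  refine ((hu.prod hv).image hf).closure_of_subset ?_
  rintro _ ⟨i, rfl⟩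
  exact ⟨(u i, v i), ⟨subset_closure ⟨i, rfl⟩, subset_closure ⟨i, rfl⟩⟩, rfl⟩

end RelativelyCompactRange

namespace LieHom

variable {K L : Type*} [CommRing K] [LieRing L] [LieAlgebra K L]

theorem iterate_map_smul (α : L →ₗ⁅K⁆ L) (n : ℕ) (c : K) (x : L) :
    α^[n] (c • x) = c • α^[n] x :=
  Commute.iterate_left (g := (c • ·)) (fun x => α.map_smul c x) n x

theorem iterate_map_lie (α : L →ₗ⁅K⁆ L) (n : ℕ) (x y : L) :
    α^[n] ⁅x, y⁆ = ⁅α^[n] x, α^[n] y⁆ :=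
  Semiconj₂.iterate (fun x y => α.map_lie x y) n x y

variable [TopologicalSpace L] [ContinuousAdd L] [ContinuousConstSMul K L] [R1Space L]

def parSubalgebra (α : L →ₗ⁅K⁆ L) (hbr : Continuous fun p : L × L => ⁅p.1, p.2⁆) :
    LieSubalgebra K L where
  carrier := {x | IsCompact (closure (Set.range fun n : ℕ => (⇑α)^[n] x))}
  zero_mem' := isCompact_singleton.closure_of_subset <| by
    rintro _ ⟨n, rfl⟩
    exact iterate_map_zero α n
  add_mem' {x y} hx hy := by
    simpa only [mem_ofPred_eq, iterate_map_add] using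
      isCompact_closure_range_map₂ (f := (· + ·)) continuous_add hx hy
  smul_mem' c x hx := by
    simpa only [mem_ofPred_eq, iterate_map_smul] using
      isCompact_closure_range_comp (continuous_const_smul c) hx
  lie_mem' {x y} hx hy := by
    simpa only [mem_ofPred_eq, iterate_map_lie] using
      isCompact_closure_range_map₂ (f := fun a b => ⁅a, b⁆) hbr hx hy

end LieHom

theorem stmt6_general {K L : Type*} [NontriviallyNormedField K] [LieRing L] [LieAlgebra K L]
    [TopologicalSpace L] [IsTopologicalAddGroup L] [ContinuousSMul K L]
    (hbr : Continuous fun p : L × L => ⁅p.1, p.2⁆)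
    (α : L →ₗ⁅K⁆ L) :
    ∃ S : LieSubalgebra K L,
      (S : Set L) =
        {x : L | IsCompact (closure (Set.range fun n : ℕ => (⇑α)^[n] x))} :=
  ⟨α.parSubalgebra hbr, rfl⟩

theorem stmt6 {K L : Type*} [NontriviallyNormedField K] [LieRing L] [LieAlgebra K L]
    [TopologicalSpace L] [IsTopologicalAddGroup L] [ContinuousSMul K L]
    (hbr : Continuous fun p : L × L => ⁅p.1, p.2⁆)
    (α : L →ₗ⁅K⁆ L) (hα : Continuous α) :
    ∃ S : LieSubalgebra K L,
      (S : Set L) =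
        {x : L | IsCompact (closure (Set.range fun n : ℕ => (⇑α)^[n] x))} :=
  stmt6_general hbr α
end

section
/- Let G be a topological group in which every ascending union of closed subgroups is closed, and α an endomorphism of G. Suppose (V_n)_{n∈ℕ} is a decreasing sequence of closed subgroups forming a basis of identity neighbourhoods. Then the contraction group con(α) = ⋂_{n∈ℕ} ⋃_{m∈ℕ} ⋂_{k≥m} α^{-k}(V_n), and con(α) is closed in G. -/
/-! Since the `V n` form a countable basis at `1`, a point lies in `con(α)` iff, for every `n`,
its orbit eventually stays in `V n`. For fixed `n`, the points whose orbit stays in `V n` from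
time `m` on form closed subgroups increasing in `m`, so their union is closed by hypothesis, and
`con(α)` is an intersection of closed sets. -/

open Filter Set

theorem setOf_tendsto_eq_iInter_iUnion_iInter {X Y ι : Type*} {l : Filter Y} {V : ι → Set Y}
    (hl : l.HasBasis (fun _ => True) V) (g : ℕ → X → Y) :
    {x | Tendsto (fun k => g k x) atTop l} = ⋂ n, ⋃ m, ⋂ k, ⋂ (_ : m ≤ k), g k ⁻¹' V n := by
  ext x
  simp [hl.tendsto_right_iff, eventually_atTop]

namespace Subgroup

variable {G : Type*} [Group G]

def comapIterateFrom (α : G →* G) (V : Subgroup G) (m : ℕ) : Subgroup G :=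
  ⨅ k ≥ m, V.comap ((show Monoid.End G from α) ^ k)

theorem coe_comapIterateFrom (α : G →* G) (V : Subgroup G) (m : ℕ) :
    (V.comapIterateFrom α m : Set G) = ⋂ k, ⋂ (_ : m ≤ k), (⇑α)^[k] ⁻¹' V := by
  simp only [comapIterateFrom, coe_iInf]
  rfl

theorem monotone_comapIterateFrom (α : G →* G) (V : Subgroup G) :
    Monotone (V.comapIterateFrom α) :=
  fun _ _ hab => le_iInf₂ fun k hk => iInf₂_le k (hab.trans hk)

theorem isClosed_comapIterateFrom [TopologicalSpace G] {α : G →* G} (hα : Continuous α)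
    {V : Subgroup G} (hV : IsClosed (V : Set G)) (m : ℕ) :
    IsClosed (V.comapIterateFrom α m : Set G) := by
  rw [coe_comapIterateFrom]
  exact isClosed_iInter fun k => isClosed_iInter fun _ => hV.preimage (hα.iterate k)

end Subgroup

theorem stmt10_general {G : Type*} [Group G] [TopologicalSpace G]
    (hasc : ∀ H : ℕ → Subgroup G, Monotone H → (∀ n, IsClosed (H n : Set G)) →
      IsClosed (⋃ n, (H n : Set G)))
    (α : G →* G) (hα : Continuous α)
    (V : ℕ → Subgroup G)
    (hclosed : ∀ n, IsClosed (V n : Set G))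
    (hnbhd : ∀ n, (V n : Set G) ∈ nhds (1 : G))
    (hbasis : ∀ W ∈ nhds (1 : G), ∃ n, (V n : Set G) ⊆ W) :
    ({x : G | Filter.Tendsto (fun n : ℕ => (⇑α)^[n] x) Filter.atTop (nhds 1)} =
      ⋂ n : ℕ, ⋃ m : ℕ, ⋂ k : ℕ, ⋂ (_ : m ≤ k), (⇑α)^[k] ⁻¹' (V n : Set G)) ∧
    IsClosed {x : G | Filter.Tendsto (fun n : ℕ => (⇑α)^[n] x) Filter.atTop (nhds 1)} := by
  have hV : (nhds (1 : G)).HasBasis (fun _ => True) (fun n => (V n : Set G)) :=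
    ⟨fun W => ⟨fun hW => (hbasis W hW).imp fun _ h => ⟨trivial, h⟩,
      fun ⟨n, _, hn⟩ => Filter.mem_of_superset (hnbhd n) hn⟩⟩
  have hcon := setOf_tendsto_eq_iInter_iUnion_iInter hV fun k => (⇑α)^[k]
  refine ⟨hcon, ?_⟩
  rw [hcon]
  refine isClosed_iInter fun n => ?_
  simp_rw [← Subgroup.coe_comapIterateFrom]
  exact hasc _ ((V n).monotone_comapIterateFrom α) ((V n).isClosed_comapIterateFrom hα (hclosed n))

theorem stmt10 {G : Type*} [Group G] [TopologicalSpace G] [IsTopologicalGroup G]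
    (hasc : ∀ H : ℕ → Subgroup G, Monotone H → (∀ n, IsClosed (H n : Set G)) →
      IsClosed (⋃ n, (H n : Set G)))
    (α : G →* G) (hα : Continuous α)
    (V : ℕ → Subgroup G) (hanti : Antitone V)
    (hclosed : ∀ n, IsClosed (V n : Set G))
    (hnbhd : ∀ n, (V n : Set G) ∈ nhds (1 : G))
    (hbasis : ∀ W ∈ nhds (1 : G), ∃ n, (V n : Set G) ⊆ W) :
    ({x : G | Filter.Tendsto (fun n : ℕ => (⇑α)^[n] x) Filter.atTop (nhds 1)} =
      ⋂ n : ℕ, ⋃ m : ℕ, ⋂ k : ℕ, ⋂ (_ : m ≤ k), (⇑α)^[k] ⁻¹' (V n : Set G)) ∧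
    IsClosed {x : G | Filter.Tendsto (fun n : ℕ => (⇑α)^[n] x) Filter.atTop (nhds 1)} :=
  stmt10_general hasc α hα V hclosed hnbhd hbasis
end

section
/- Let G be a topological group, α a continuous endomorphism, and U a compact open subgroup. Define U₀ := U and U_{n+1} := U ∩ α(U_n). Then the set U₊ of all x ∈ U admitting an α-regressive trajectory inside U equals ⋂_{n≥0} U_n, and satisfies U₊ ⊆ α(U₊). -/
/-- The descending sequence `U₀ = U`, `U_{n+1} = U ∩ α(U_n)`. -/
def Useq {G : Type*} [Group G] (α : G →* G) (U : Set G) : ℕ → Set G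
  | 0 => U
  | n + 1 => U ∩ ⇑α '' Useq α U n

/-!
A trajectory in `U` stays in every `U_n`, by induction on `n`. Conversely, `S := ⋂ U_n`
satisfies `S ⊆ α(S)`: `G` is Hausdorff (a T₁ topological group), so for `x ∈ S` the fibres
`α⁻¹{x} ∩ U_n` form a decreasing sequence of nonempty compact sets and have a common point.
Choosing preimages in `S` repeatedly then gives each point of `S` a regressive trajectory
in `S ⊆ U`.
-/

open Set

/-- The set `U₊` of the paper, for an arbitrary map `f`. -/
def regressiveSet {X : Type*} (f : X → X) (U : Set X) : Set X :=
  {x | x ∈ U ∧ ∃ g : ℕ → X, (∀ n, g n ∈ U) ∧ g 0 = x ∧ ∀ n, f (g (n + 1)) = g n}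

theorem regressiveSet_subset_image {X : Type*} (f : X → X) (U : Set X) :
    regressiveSet f U ⊆ f '' regressiveSet f U := by
  rintro x ⟨-, g, hgU, rfl, hg⟩
  exact ⟨g 1, ⟨hgU 1, fun n => g (n + 1), fun n => hgU (n + 1), rfl, fun n => hg (n + 1)⟩, hg 0⟩

theorem subset_regressiveSet_of_subset_image {X : Type*} {f : X → X} {S U : Set X}
    (hSU : S ⊆ U) (hS : S ⊆ f '' S) : S ⊆ regressiveSet f U := by
  intro x hx
  choose pre hpre using fun y : S => hS y.2
  let back : S → S := fun y => ⟨pre y, (hpre y).1⟩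
  refine ⟨hSU hx, fun n => (back^[n] ⟨x, hx⟩ : X), fun n => hSU (back^[n] _).2, rfl, fun n => ?_⟩
  simp only [Function.iterate_succ_apply']
  exact (hpre _).2

namespace Useq

variable {G : Type*} [Group G] (α : G →* G) (U : Set G)

theorem antitone : Antitone (Useq α U) := by
  refine antitone_nat_of_succ_le fun n => ?_
  induction n with
  | zero => exact inter_subset_left
  | succ n ih => exact inter_subset_inter_right U (image_mono ih)

theorem regressiveSet_subset_iInter : regressiveSet α U ⊆ ⋂ n, Useq α U n := by
  rintro x ⟨-, g, hgU, rfl, hg⟩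
  suffices ∀ n k, g k ∈ Useq α U n from mem_iInter.2 fun n => this n 0
  intro n
  induction n with
  | zero => exact hgU
  | succ n ih => exact fun k => ⟨hgU k, g (k + 1), ih (k + 1), hg k⟩

variable [TopologicalSpace G] [T2Space G] {α U}

theorem isCompact (hα : Continuous α) (hU : IsCompact U) : ∀ n, IsCompact (Useq α U n)
  | 0 => hU
  | n + 1 => hU.inter ((isCompact hα hU n).image hα)

theorem iInter_subset_image_iInter (hα : Continuous α) (hU : IsCompact U) :
    ⋂ n, Useq α U n ⊆ α '' ⋂ n, Useq α U n := by
  intro x hx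
  have hfiber : ∀ n, IsCompact (Useq α U n ∩ α ⁻¹' {x}) := fun n =>
    (isCompact hα hU n).inter_right (isClosed_singleton.preimage hα)
  have hne : ∀ n, (Useq α U n ∩ α ⁻¹' {x}).Nonempty := fun n => by
    obtain ⟨-, y, hy, hyx⟩ := mem_iInter.1 hx (n + 1)
    exact ⟨y, hy, hyx⟩
  obtain ⟨y, hy⟩ := IsCompact.nonempty_iInter_of_sequence_nonempty_isCompact_isClosed _
    (fun n => inter_subset_inter_left _ (antitone α U n.le_succ)) hne (hfiber 0)
    (fun n => (hfiber n).isClosed)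
  rw [← iInter_inter] at hy
  exact ⟨y, hy.1, hy.2⟩

end Useq

theorem stmt16_general {G : Type*} [Group G] [TopologicalSpace G] [IsTopologicalGroup G]
    [TotallyDisconnectedSpace G]
    (α : G →* G) (hα : Continuous α) (U : Subgroup G)
    (hUc : IsCompact (U : Set G)) :
    ({x : G | x ∈ U ∧ ∃ f : ℕ → G, (∀ n, f n ∈ U) ∧ f 0 = x ∧ ∀ n, α (f (n + 1)) = f n} =
      ⋂ n : ℕ, Useq α (U : Set G) n) ∧
    {x : G | x ∈ U ∧ ∃ f : ℕ → G, (∀ n, f n ∈ U) ∧ f 0 = x ∧ ∀ n, α (f (n + 1)) = f n} ⊆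
      ⇑α '' {x : G | x ∈ U ∧ ∃ f : ℕ → G, (∀ n, f n ∈ U) ∧ f 0 = x ∧
        ∀ n, α (f (n + 1)) = f n} :=
  ⟨(Useq.regressiveSet_subset_iInter α U).antisymm <|
      subset_regressiveSet_of_subset_image (iInter_subset _ 0)
        (Useq.iInter_subset_image_iInter hα hUc),
    regressiveSet_subset_image α U⟩

theorem stmt16 {G : Type*} [Group G] [TopologicalSpace G] [IsTopologicalGroup G]
    [LocallyCompactSpace G] [TotallyDisconnectedSpace G]
    (α : G →* G) (hα : Continuous α) (U : Subgroup G)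
    (hUc : IsCompact (U : Set G)) (hUo : IsOpen (U : Set G)) :
    ({x : G | x ∈ U ∧ ∃ f : ℕ → G, (∀ n, f n ∈ U) ∧ f 0 = x ∧ ∀ n, α (f (n + 1)) = f n} =
      ⋂ n : ℕ, Useq α (U : Set G) n) ∧
    {x : G | x ∈ U ∧ ∃ f : ℕ → G, (∀ n, f n ∈ U) ∧ f 0 = x ∧ ∀ n, α (f (n + 1)) = f n} ⊆
      ⇑α '' {x : G | x ∈ U ∧ ∃ f : ℕ → G, (∀ n, f n ∈ U) ∧ f 0 = x ∧
        ∀ n, α (f (n + 1)) = f n} :=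
  stmt16_general α hα U hUc
end
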